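/- arXiv:1101.1990 — 3 statements merged into one kernel-verified Lean document; each statement's English description precedes it below -/
import Mathlib

section
/- Let T > 0, let A₁ be a real Banach space, let M₊ be a seminormed nonnegative cone in A₁ that is compactly embedded in A₁, and let 1 ≤ p < ∞ and p₁ = 1. Then Y₊ is compactly embedded in L^p(0,T; A₁): every sequence (u_n) in Y₊ with sup_n [u_n]_{Y₊} < ∞ has a subsequence that converges in the norm of L^p(0,T; A₁). -/
/-!
Cut `(0, T]` into `m` cells of length `σ = T / m`. Since `∫ ‖ν (uₙ t)‖ᵖ ≤ Kᵖ`, Markov's inequality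
gives in every cell a node `τ` at which `uₙ τ` lies in the sublevel set `{φ ∈ M₊ | ‖ν φ‖ᵖ ≤ r}`
with `r = (Kᵖ + 1) / σ`, a relatively compact subset of `A₁`. On a cell, `‖uₙ t - uₙ τ‖` is at most
the `L¹` mass `aₖ` of `duₙ/dt` on that cell, so the step function with the values `uₙ τₖ` lies in a
fixed compact subset of `Lᵖ` and is within `(∑ aₖᵖ σ)^(1/p) ≤ K σ^(1/p)` of `uₙ`. Letting `σ → 0`,
the sequence is totally bounded in the complete space `Lᵖ(0, T; A₁)`.
-/

open Filter Topology MeasureTheory Set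
open scoped ENNReal Function

theorem totallyBounded_of_forall_exists_subseq_tendsto {X : Type*} [UniformSpace X] {s : Set X}
    (h : ∀ u : ℕ → X, (∀ n, u n ∈ s) →
      ∃ (φ : ℕ → ℕ) (x : X), StrictMono φ ∧ Tendsto (fun n => u (φ n)) atTop (𝓝 x)) :
    TotallyBounded s := by
  intro V hV
  by_contra! hs
  obtain ⟨u, hus, hu⟩ : ∃ u : ℕ → X, (∀ n, u n ∈ s) ∧
      ∀ n m, m < n → u m ∉ UniformSpace.ball (u n) V := by
    simp only [not_subset, mem_iUnion₂, not_exists, exists_prop] at hs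
    simpa only [forall_and, forall_mem_image, not_and] using! seq_of_forall_finite_exists hs
  obtain ⟨φ, x, hφ, hx⟩ := h u hus
  obtain ⟨N, hN⟩ := hx.cauchySeq.mem_entourage hV
  exact hu (φ (N + 1)) (φ N) (hφ N.lt_add_one) (hN (N + 1) N N.le_succ le_rfl)

theorem totallyBounded_of_forall_isCompact_dist_le {X : Type*} [PseudoMetricSpace X] {s : Set X}
    (h : ∀ ε > 0, ∃ C, IsCompact C ∧ ∀ x ∈ s, ∃ c ∈ C, dist x c ≤ ε) : TotallyBounded s := by
  refine Metric.totallyBounded_iff.2 fun ε hε => ?_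
  obtain ⟨C, hC, hsC⟩ := h (ε / 2) (half_pos hε)
  obtain ⟨t, ht, hCt⟩ := Metric.totallyBounded_iff.1 hC.totallyBounded (ε / 2) (half_pos hε)
  refine ⟨t, ht, fun x hx => ?_⟩
  obtain ⟨c, hc, hxc⟩ := hsC x hx
  obtain ⟨y, hy, hcy⟩ := mem_iUnion₂.1 (hCt hc)
  refine mem_iUnion₂.2 ⟨y, hy, ?_⟩
  rw [Metric.mem_ball] at hcy ⊢
  linarith [dist_triangle x c y]

theorem isCompact_closure_setOf_enorm_rpow_le {X : Type*} [UniformSpace X] [CompleteSpace X]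
    {S : Set X} {ν : X → ℝ}
    (hcpt : ∀ a : ℕ → X, (∀ n, a n ∈ S) → (∃ K : ℝ, ∀ n, ν (a n) ≤ K) →
      ∃ (ψ : ℕ → ℕ) (l : X), StrictMono ψ ∧ Tendsto (fun n => a (ψ n)) atTop (𝓝 l))
    {q : ℝ} (hq : 0 < q) {r : ℝ≥0∞} (hr : r ≠ ∞) :
    IsCompact (closure {φ ∈ S | ‖ν φ‖ₑ ^ q ≤ r}) := by
  refine (totallyBounded_of_forall_exists_subseq_tendsto fun a ha => hcpt a (fun n => (ha n).1)
    ⟨(r ^ q⁻¹).toReal, fun n => ?_⟩).closure.isCompact_of_isClosed isClosed_closure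
  have h : ‖ν (a n)‖ₑ ≤ r ^ q⁻¹ := (ENNReal.le_rpow_inv_iff hq).2 (ha n).2
  rw [← ofReal_norm,
    ENNReal.ofReal_le_iff_le_toReal (ENNReal.rpow_ne_top_of_nonneg (by positivity) hr)] at h
  exact (le_abs_self _).trans h

theorem ENNReal.sum_rpow_le_rpow_sum {ι : Type*} (s : Finset ι) (f : ι → ℝ≥0∞) {q : ℝ}
    (hq : 1 ≤ q) : ∑ i ∈ s, f i ^ q ≤ (∑ i ∈ s, f i) ^ q := by
  induction s using Finset.cons_induction with
  | empty => simp [ENNReal.zero_rpow_of_pos (zero_lt_one.trans_le hq)]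
  | cons i s hi ih =>
    simp only [Finset.sum_cons]
    exact (add_le_add_right ih _).trans (ENNReal.add_rpow_le_rpow_add _ _ hq)

theorem tendsto_ofReal_mul_ofReal_div_natCast_rpow (K T : ℝ) {p : ℝ≥0∞} (hp : 1 ≤ p)
    (hp' : p ≠ ∞) :
    Tendsto (fun m : ℕ => ENNReal.ofReal K * ENNReal.ofReal (T / m) ^ (1 / p.toReal))
      atTop (𝓝 0) := by
  have hq : 0 < 1 / p.toReal :=
    one_div_pos.2 (ENNReal.toReal_pos (zero_lt_one.trans_le hp).ne' hp')
  have h := (ENNReal.tendsto_ofReal (tendsto_const_div_atTop_nhds_zero_nat T)).ennrpow_const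
    (1 / p.toReal)
  rw [ENNReal.ofReal_zero, ENNReal.zero_rpow_of_pos hq] at h
  simpa using ENNReal.Tendsto.const_mul h (Or.inr ENNReal.ofReal_ne_top)

namespace MeasureTheory

variable {α : Type*} [MeasurableSpace α] {μ : Measure α}

theorem exists_mem_le_of_setLIntegral_lt {s : Set α} {F : α → ℝ≥0∞} {r : ℝ≥0∞} {P : α → Prop}
    (hs : MeasurableSet s) (hP : ∀ᵐ x ∂μ.restrict s, P x) (h : ∫⁻ x in s, F x ∂μ < r * μ s) :
    ∃ x ∈ s, P x ∧ F x ≤ r := by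
  by_contra! hF
  have hrF : ∀ᵐ x ∂μ.restrict s, r ≤ F x := by
    filter_upwards [hP, ae_restrict_mem hs] with x hPx hx using (hF x hx hPx).le
  refine h.not_ge ?_
  calc r * μ s = ∫⁻ _ in s, r ∂μ := (setLIntegral_const s r).symm
    _ ≤ ∫⁻ x in s, F x ∂μ := lintegral_mono_ae hrF

theorem eLpNorm_restrict_iUnion_le {E ι : Type*} [NormedAddCommGroup E] [Fintype ι]
    {I : ι → Set α} (hd : Pairwise (Disjoint on I)) (hI : ∀ i, MeasurableSet (I i))
    {f : α → E} {a : ι → ℝ≥0∞} (hf : ∀ i, ∀ᵐ x ∂μ.restrict (I i), ‖f x‖ₑ ≤ a i)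
    {σ : ℝ≥0∞} (hσ : ∀ i, μ (I i) ≤ σ) {p : ℝ≥0∞} (hp : 1 ≤ p) (hp' : p ≠ ∞) :
    eLpNorm f p (μ.restrict (⋃ i, I i)) ≤ (∑ i, a i) * σ ^ (1 / p.toReal) := by
  have hq : 1 ≤ p.toReal := by simpa using ENNReal.toReal_mono hp' hp
  have hq0 : 0 < p.toReal := zero_lt_one.trans_le hq
  have hint : ∫⁻ x in ⋃ i, I i, ‖f x‖ₑ ^ p.toReal ∂μ ≤ (∑ i, a i) ^ p.toReal * σ := by
    rw [lintegral_iUnion hI hd, tsum_fintype]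
    calc ∑ i, ∫⁻ x in I i, ‖f x‖ₑ ^ p.toReal ∂μ ≤ ∑ i, a i ^ p.toReal * σ := by
          refine Finset.sum_le_sum fun i _ => ?_
          calc ∫⁻ x in I i, ‖f x‖ₑ ^ p.toReal ∂μ ≤ ∫⁻ _ in I i, a i ^ p.toReal ∂μ :=
                lintegral_mono_ae <| (hf i).mono fun x hx => ENNReal.rpow_le_rpow hx hq0.le
            _ ≤ a i ^ p.toReal * σ := by rw [setLIntegral_const]; gcongr; exact hσ i
      _ ≤ (∑ i, a i) ^ p.toReal * σ := by
          rw [← Finset.sum_mul]; gcongr; exact ENNReal.sum_rpow_le_rpow_sum _ _ hq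
  rw [eLpNorm_eq_lintegral_rpow_enorm_toReal (zero_lt_one.trans_le hp).ne' hp']
  calc (∫⁻ x in ⋃ i, I i, ‖f x‖ₑ ^ p.toReal ∂μ) ^ (1 / p.toReal)
      ≤ ((∑ i, a i) ^ p.toReal * σ) ^ (1 / p.toReal) := by gcongr
    _ = (∑ i, a i) * σ ^ (1 / p.toReal) := by
      rw [ENNReal.mul_rpow_of_nonneg _ _ (by positivity), ← ENNReal.rpow_mul,
        mul_one_div_cancel hq0.ne', ENNReal.rpow_one]

theorem Lp.coeFn_finset_sum {E ι : Type*} [NormedAddCommGroup E] {p : ℝ≥0∞} (s : Finset ι)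
    (F : ι → Lp E p μ) : ⇑(∑ i ∈ s, F i) =ᵐ[μ] ∑ i ∈ s, ⇑(F i) := by
  induction s using Finset.cons_induction with
  | empty => simpa using Lp.coeFn_zero E p μ
  | cons i s hi ih =>
    simp only [Finset.sum_cons]
    exact (Lp.coeFn_add _ _).trans (EventuallyEq.rfl.add ih)

theorem continuous_indicatorConstLp {E : Type*} [NormedAddCommGroup E] {p : ℝ≥0∞} [Fact (1 ≤ p)]
    {s : Set α} (hs : MeasurableSet s) (hμs : μ s ≠ ∞) :
    Continuous fun c : E => indicatorConstLp p hs hμs c :=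
  AddMonoidHomClass.continuous_of_bound
    (AddMonoidHom.mk' (fun c : E => indicatorConstLp p hs hμs c)
      fun _ _ => indicatorConstLp_add.symm)
    _ fun _ => (norm_indicatorConstLp_le (hs := hs) (hμs := hμs)).trans_eq (mul_comm _ _)

theorem exists_subseq_tendsto_eLpNorm_of_forall_isCompact {E : Type*} [NormedAddCommGroup E]
    [CompleteSpace E] {p : ℝ≥0∞} [Fact (1 ≤ p)] {f : ℕ → α → E} (hf : ∀ n, MemLp (f n) p μ)
    (h : ∀ ε : ℝ, 0 < ε → ∃ C : Set (Lp E p μ), IsCompact C ∧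
      ∀ n, ∃ g ∈ C, eLpNorm (f n - ⇑g) p μ ≤ ENNReal.ofReal ε) :
    ∃ ψ : ℕ → ℕ, StrictMono ψ ∧
      ∃ g : α → E, Tendsto (fun j => eLpNorm (f (ψ j) - g) p μ) atTop (𝓝 0) := by
  set U : ℕ → Lp E p μ := fun n => (hf n).toLp
  have hU : ∀ n (g : Lp E p μ), eLpNorm (⇑(U n) - ⇑g) p μ = eLpNorm (f n - ⇑g) p μ := fun n g =>
    eLpNorm_congr_ae ((hf n).coeFn_toLp.sub EventuallyEq.rfl)
  have htb : TotallyBounded (range U) := totallyBounded_of_forall_isCompact_dist_le fun ε hε => by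
    obtain ⟨C, hC, hfC⟩ := h ε hε
    refine ⟨C, hC, ?_⟩
    rintro _ ⟨n, rfl⟩
    obtain ⟨g, hg, hfg⟩ := hfC n
    exact ⟨g, hg, by rw [Lp.dist_def, hU]; exact ENNReal.toReal_le_of_le_ofReal hε.le hfg⟩
  obtain ⟨G, -, ψ, hψ, hG⟩ := (htb.closure.isCompact_of_isClosed isClosed_closure).tendsto_subseq
    fun n => subset_closure (mem_range_self n)
  refine ⟨ψ, hψ, G, ?_⟩
  simpa only [hU] using (Lp.tendsto_Lp_iff_tendsto_eLpNorm' (fun j => U (ψ j)) G).1 hG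

section StepLp

variable {E ι : Type*} [NormedAddCommGroup E] {p : ℝ≥0∞} [Fintype ι] {I : ι → Set α}
  (hI : ∀ i, MeasurableSet (I i)) (hμI : ∀ i, μ (I i) ≠ ∞)

noncomputable def stepLp (c : ι → E) : Lp E p μ := ∑ i, indicatorConstLp p (hI i) (hμI i) (c i)

theorem continuous_stepLp [Fact (1 ≤ p)] : Continuous (stepLp (E := E) (p := p) hI hμI) :=
  continuous_finsetSum _ fun i _ => (continuous_indicatorConstLp (hI i) (hμI i)).comp
    (continuous_apply i)

theorem stepLp_ae_eq (hd : Pairwise (Disjoint on I)) (c : ι → E) (i : ι) :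
    ∀ᵐ x ∂μ.restrict (I i), stepLp (p := p) hI hμI c x = c i := by
  have hsum := Lp.coeFn_finset_sum Finset.univ fun j => indicatorConstLp p (hI j) (hμI j) (c j)
  have hind : ∀ᵐ x ∂μ, ∀ j,
      indicatorConstLp p (hI j) (hμI j) (c j) x = (I j).indicator (fun _ => c j) x :=
    ae_all_iff.2 fun j => indicatorConstLp_coeFn
  rw [ae_restrict_iff' (hI i)]
  filter_upwards [hsum, hind] with x hx hxj hxi
  rw [stepLp, hx, Finset.sum_apply, Finset.sum_eq_single i]
  · rw [hxj, indicator_of_mem hxi]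
  · intro j _ hji
    rw [hxj, indicator_of_notMem fun hxj' => (hd hji).notMem_of_mem_left hxj' hxi]
  · simp

end StepLp

end MeasureTheory

theorem enorm_sub_le_setLIntegral_of_eq_add_integral {E : Type*} [NormedAddCommGroup E]
    [NormedSpace ℝ E] {u w : ℝ → E} {T a b s t : ℝ} (hw : IntegrableOn w (Ioc 0 T))
    (hab : Ioc a b ⊆ Ioc 0 T) (hs : s ∈ Ioc a b) (ht : t ∈ Ioc a b)
    (hus : u s = u 0 + ∫ x in 0..s, w x) (hut : u t = u 0 + ∫ x in 0..t, w x) :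
    ‖u t - u s‖ₑ ≤ ∫⁻ x in Ioc a b, ‖w x‖ₑ := by
  have hw' : ∀ r ∈ Ioc a b, IntervalIntegrable w volume 0 r := fun r hr =>
    (intervalIntegrable_iff_integrableOn_Ioc_of_le (hab hr).1.le).2
      (hw.mono_set (Ioc_subset_Ioc_right (hab hr).2))
  rw [hut, hus, add_sub_add_left_eq_sub,
    intervalIntegral.integral_interval_sub_left (hw' t ht) (hw' s hs)]
  calc ‖∫ x in s..t, w x‖ₑ = ‖∫ x in uIoc s t, w x‖ₑ := by
        simp only [← ofReal_norm, intervalIntegral.norm_integral_eq_norm_integral_uIoc]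
    _ ≤ ∫⁻ x in uIoc s t, ‖w x‖ₑ := enorm_integral_le_lintegral_enorm _
    _ ≤ ∫⁻ x in Ioc a b, ‖w x‖ₑ :=
        lintegral_mono_set (Ioc_subset_Ioc (le_min hs.1.le ht.1.le) (max_le hs.2 ht.2))

def gridIoc (T : ℝ) (m : ℕ) (k : Fin m) : Set ℝ := Ioc (k * (T / m)) ((k + 1) * (T / m))

section GridIoc

variable {T : ℝ} {m : ℕ}

theorem monotone_natCast_mul_div (hT : 0 ≤ T) : Monotone fun k : ℕ => (k : ℝ) * (T / m) :=
  fun _ _ hij => mul_le_mul_of_nonneg_right (Nat.cast_le.2 hij) (div_nonneg hT m.cast_nonneg)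

theorem pairwise_disjoint_gridIoc (hT : 0 ≤ T) : Pairwise (Disjoint on gridIoc T m) := by
  intro i j hij
  simpa [gridIoc, Function.onFun] using
    (monotone_natCast_mul_div hT).pairwise_disjoint_on_Ioc_succ (Fin.val_injective.ne hij)

theorem iUnion_gridIoc (hT : 0 ≤ T) (hm : m ≠ 0) : ⋃ k, gridIoc T m k = Ioc 0 T := by
  have h := (monotone_natCast_mul_div (m := m) hT).biUnion_Ico_Ioc_map_succ 0 m
  simp only [Order.succ_eq_add_one, Nat.cast_add, Nat.cast_one, CharP.cast_eq_zero,
    zero_mul] at h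
  rw [mul_div_cancel₀ _ (Nat.cast_ne_zero.2 hm)] at h
  rw [← h]
  ext t
  simp [gridIoc, Fin.exists_iff]

theorem gridIoc_subset_Ioc (hT : 0 ≤ T) (hm : m ≠ 0) (k : Fin m) : gridIoc T m k ⊆ Ioc 0 T :=
  (subset_iUnion _ k).trans_eq (iUnion_gridIoc hT hm)

theorem measurableSet_gridIoc (T : ℝ) (m : ℕ) (k : Fin m) : MeasurableSet (gridIoc T m k) :=
  measurableSet_Ioc

theorem volume_gridIoc (k : Fin m) : volume (gridIoc T m k) = ENNReal.ofReal (T / m) := by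
  rw [gridIoc, Real.volume_Ioc]
  ring_nf

theorem exists_nodes_gridIoc (hT : 0 ≤ T) (hm : m ≠ 0) {P : ℝ → Prop}
    (hP : ∀ᵐ t ∂volume.restrict (Ioc 0 T), P t) {F : ℝ → ℝ≥0∞} {r : ℝ≥0∞}
    (hF : ∫⁻ t in Ioc 0 T, F t < r * ENNReal.ofReal (T / m)) :
    ∃ τ : Fin m → ℝ, ∀ k, τ k ∈ gridIoc T m k ∧ P (τ k) ∧ F (τ k) ≤ r := by
  have h : ∀ k, ∃ t ∈ gridIoc T m k, P t ∧ F t ≤ r := fun k =>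
    exists_mem_le_of_setLIntegral_lt (measurableSet_gridIoc T m k)
      (ae_restrict_of_ae_restrict_of_subset (gridIoc_subset_Ioc hT hm k) hP)
      ((lintegral_mono_set (gridIoc_subset_Ioc hT hm k)).trans_lt
        (hF.trans_eq (by rw [volume_gridIoc])))
  choose τ hτ hPF using h
  exact ⟨τ, fun k => ⟨hτ k, hPF k⟩⟩

end GridIoc

section GridStepLp

variable {E : Type*} [NormedAddCommGroup E] [NormedSpace ℝ E] {T : ℝ} {m : ℕ}

noncomputable def gridStepLp (T : ℝ) (m : ℕ) (p : ℝ≥0∞) (c : Fin m → E) :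
    Lp E p (volume.restrict (Ioc 0 T)) :=
  stepLp (measurableSet_gridIoc T m) (fun _ => measure_ne_top _ _) c

theorem eLpNorm_sub_gridStepLp_le (hT : 0 ≤ T) (hm : m ≠ 0) {p : ℝ≥0∞} (hp : 1 ≤ p)
    (hp' : p ≠ ∞) {u w : ℝ → E} (hw : IntegrableOn w (Ioc 0 T))
    (hrep : ∀ᵐ t ∂volume.restrict (Ioc 0 T), u t = u 0 + ∫ s in 0..t, w s)
    {τ : Fin m → ℝ} (hτ : ∀ k, τ k ∈ gridIoc T m k ∧ u (τ k) = u 0 + ∫ s in 0..τ k, w s) :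
    eLpNorm (u - ⇑(gridStepLp T m p fun k => u (τ k))) p (volume.restrict (Ioc 0 T))
      ≤ (∫⁻ t in Ioc 0 T, ‖w t‖ₑ) * ENNReal.ofReal (T / m) ^ (1 / p.toReal) := by
  have hstep : ∀ k, ∀ᵐ t ∂volume.restrict (gridIoc T m k),
      gridStepLp T m p (fun k => u (τ k)) t = u (τ k) := fun k => by
    have h := stepLp_ae_eq (μ := volume.restrict (Ioc 0 T)) (p := p) (measurableSet_gridIoc T m)
      (fun _ => measure_ne_top _ _) (pairwise_disjoint_gridIoc hT) (fun k => u (τ k)) k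
    rwa [Measure.restrict_restrict (measurableSet_gridIoc T m k),
      inter_eq_left.2 (gridIoc_subset_Ioc hT hm k)] at h
  have hsum : ∑ k, ∫⁻ t in gridIoc T m k, ‖w t‖ₑ = ∫⁻ t in Ioc 0 T, ‖w t‖ₑ := by
    rw [← iUnion_gridIoc hT hm, lintegral_iUnion (measurableSet_gridIoc T m)
      (pairwise_disjoint_gridIoc hT), tsum_fintype]
  have h := eLpNorm_restrict_iUnion_le (μ := volume) (pairwise_disjoint_gridIoc hT)
    (measurableSet_gridIoc T m) (a := fun k => ∫⁻ t in gridIoc T m k, ‖w t‖ₑ)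
    (f := u - ⇑(gridStepLp T m p fun k => u (τ k)))
    (fun k => ?_) (fun k => (volume_gridIoc k).le) hp hp'
  · rwa [iUnion_gridIoc hT hm, hsum] at h
  filter_upwards [ae_restrict_of_ae_restrict_of_subset (gridIoc_subset_Ioc hT hm k) hrep,
    ae_restrict_mem (measurableSet_gridIoc T m k), hstep k] with t ht htk hg
  rw [Pi.sub_apply, hg]
  exact enorm_sub_le_setLIntegral_of_eq_add_integral hw (gridIoc_subset_Ioc hT hm k) (hτ k).1 htk
    (hτ k).2 ht

theorem exists_isCompact_forall_eLpNorm_sub_le [CompleteSpace E] {S : Set E} {ν : E → ℝ}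
    (hcpt : ∀ a : ℕ → E, (∀ n, a n ∈ S) → (∃ K : ℝ, ∀ n, ν (a n) ≤ K) →
      ∃ (ψ : ℕ → ℕ) (l : E), StrictMono ψ ∧ Tendsto (fun n => a (ψ n)) atTop (𝓝 l))
    (hT : 0 < T) (hm : m ≠ 0) {p : ℝ≥0∞} [Fact (1 ≤ p)] (hp' : p ≠ ∞)
    {u w : ℕ → ℝ → E} (huS : ∀ n, ∀ t ∈ Ioc 0 T, u n t ∈ S)
    (hw : ∀ n, IntegrableOn (w n) (Ioc 0 T))
    (hrep : ∀ n, ∀ᵐ t ∂volume.restrict (Ioc 0 T), u n t = u n 0 + ∫ s in 0..t, w n s)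
    {B : ℝ≥0∞} (hB : B ≠ ∞)
    (hνB : ∀ n, eLpNorm (fun t => ν (u n t)) p (volume.restrict (Ioc 0 T)) ≤ B)
    (hwB : ∀ n, ∫⁻ t in Ioc 0 T, ‖w n t‖ₑ ≤ B) :
    ∃ C : Set (Lp E p (volume.restrict (Ioc 0 T))), IsCompact C ∧ ∀ n, ∃ g ∈ C,
      eLpNorm (u n - ⇑g) p (volume.restrict (Ioc 0 T))
        ≤ B * ENNReal.ofReal (T / m) ^ (1 / p.toReal) := by
  have hp : 1 ≤ p := Fact.out
  have hq : 0 < p.toReal := ENNReal.toReal_pos (zero_lt_one.trans_le hp).ne' hp'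
  have hσ : 0 < ENNReal.ofReal (T / m) := ENNReal.ofReal_pos.2 (by positivity)
  have hBq : B ^ p.toReal ≠ ∞ := ENNReal.rpow_ne_top_of_nonneg hq.le hB
  set r := (B ^ p.toReal + 1) / ENNReal.ofReal (T / m)
  have hV := isCompact_closure_setOf_enorm_rpow_le hcpt hq
    (r := r) (ENNReal.div_ne_top (ENNReal.add_ne_top.2 ⟨hBq, ENNReal.one_ne_top⟩) hσ.ne')
  refine ⟨gridStepLp T m p '' univ.pi fun _ => closure _,
    (isCompact_univ_pi fun _ => hV).image (continuous_stepLp _ _), fun n => ?_⟩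
  obtain ⟨τ, hτ⟩ := exists_nodes_gridIoc hT.le hm (hrep n)
    (F := fun t => ‖ν (u n t)‖ₑ ^ p.toReal) (r := r) <| by
      rw [ENNReal.div_mul_cancel hσ.ne' ENNReal.ofReal_ne_top,
        lintegral_rpow_enorm_eq_rpow_eLpNorm' hq,
        ← eLpNorm_eq_eLpNorm' (zero_lt_one.trans_le hp).ne' hp']
      exact (ENNReal.rpow_le_rpow (hνB n) hq.le).trans_lt (ENNReal.lt_add_right hBq one_ne_zero)
  refine ⟨_, mem_image_of_mem _ fun k _ =>
    subset_closure ⟨huS n _ (gridIoc_subset_Ioc hT.le hm k (hτ k).1), (hτ k).2.2⟩, ?_⟩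
  exact (eLpNorm_sub_gridStepLp_le hT.le hm hp hp' (hw n) (hrep n)
    fun k => ⟨(hτ k).1, (hτ k).2.1⟩).trans (by gcongr; exact hwB n)

end GridStepLp

theorem stmt7_general
    {A₁ : Type*} [NormedAddCommGroup A₁] [NormedSpace ℝ A₁] [CompleteSpace A₁]
    (T : ℝ) (hT : 0 < T)
    -- M₊ = S is a seminormed nonnegative cone in A₁ with seminorm ν
    (S : Set A₁) (ν : A₁ → ℝ)
    -- M₊ is embedded in A₁
    (hemb : ∃ K₀ > (0 : ℝ), ∀ φ ∈ S, ‖φ‖ ≤ K₀ * ν φ)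
    -- the embedding of M₊ in A₁ is compact
    (hcpt : ∀ a : ℕ → A₁, (∀ n, a n ∈ S) → (∃ K : ℝ, ∀ n, ν (a n) ≤ K) →
      ∃ (ψ : ℕ → ℕ) (l : A₁), StrictMono ψ ∧
        Tendsto (fun n => a (ψ n)) atTop (𝓝 l))
    -- 1 ≤ p < ∞ and p₁ = 1
    (p : ℝ≥0∞) (hp : 1 ≤ p) (hp' : p ≠ ⊤)
    -- (u_n) is a sequence in Y₊, with derivatives (w_n)
    (u : ℕ → ℝ → A₁) (w : ℕ → ℝ → A₁)
    (huS : ∀ n, ∀ t ∈ Set.Icc (0 : ℝ) T, u n t ∈ S)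
    (humeas : ∀ n, AEStronglyMeasurable (u n) (volume.restrict (Set.Ioc (0 : ℝ) T)))
    (hwint : ∀ n, IntegrableOn (w n) (Set.Ioc (0 : ℝ) T))
    (hrep : ∀ n, ∀ᵐ t ∂volume.restrict (Set.Icc (0 : ℝ) T),
      u n t = u n 0 + ∫ s in (0 : ℝ)..t, w n s)
    -- the sequence is bounded in Y₊: sup_n [u_n]_{Y₊} < ∞
    (K : ℝ)
    (hbound : ∀ n,
      eLpNorm (fun t => ν (u n t)) p (volume.restrict (Set.Ioc (0 : ℝ) T))
        + eLpNorm (w n) 1 (volume.restrict (Set.Ioc (0 : ℝ) T)) ≤ ENNReal.ofReal K) :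
    ∃ ψ : ℕ → ℕ, StrictMono ψ ∧
      ∃ g : ℝ → A₁,
        Tendsto
          (fun j => eLpNorm (fun t => u (ψ j) t - g t) p (volume.restrict (Set.Ioc (0 : ℝ) T)))
          atTop (𝓝 0) := by
  obtain ⟨K₀, hK₀, hemb⟩ := hemb
  have : Fact (1 ≤ p) := ⟨hp⟩
  have hνB n : eLpNorm (fun t => ν (u n t)) p (volume.restrict (Ioc 0 T)) ≤ ENNReal.ofReal K :=
    le_self_add.trans (hbound n)
  have hwB n : ∫⁻ t in Ioc 0 T, ‖w n t‖ₑ ≤ ENNReal.ofReal K := by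
    rw [← eLpNorm_one_eq_lintegral_enorm]
    exact le_add_self.trans (hbound n)
  have hmem n : MemLp (u n) p (volume.restrict (Ioc 0 T)) := by
    refine ⟨humeas n, (eLpNorm_le_mul_eLpNorm_of_ae_le_mul (c := K₀) ?_ p).trans_lt
      (ENNReal.mul_lt_top ENNReal.ofReal_lt_top ((hνB n).trans_lt ENNReal.ofReal_lt_top))⟩
    filter_upwards [ae_restrict_mem measurableSet_Ioc] with t ht
    exact (hemb _ (huS n t (Ioc_subset_Icc_self ht))).trans
      (mul_le_mul_of_nonneg_left (le_abs_self _) hK₀.le)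
  refine exists_subseq_tendsto_eLpNorm_of_forall_isCompact hmem fun ε hε => ?_
  obtain ⟨m, hmε, hm⟩ := ((tendsto_ofReal_mul_ofReal_div_natCast_rpow K T hp hp').eventually
    (ge_mem_nhds (ENNReal.ofReal_pos.2 hε))).and (eventually_ne_atTop 0) |>.exists
  obtain ⟨C, hC, hCu⟩ := exists_isCompact_forall_eLpNorm_sub_le hcpt hT hm hp'
    (fun n t ht => huS n t (Ioc_subset_Icc_self ht)) hwint
    (fun n => ae_restrict_of_ae_restrict_of_subset Ioc_subset_Icc_self (hrep n))
    ENNReal.ofReal_ne_top hνB hwB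
  exact ⟨C, hC, fun n => (hCu n).imp fun g hg => ⟨hg.1, hg.2.trans hmε⟩⟩

/-- Lemma 2, part (b): if M₊ is compactly embedded in the Banach space A₁,
1 ≤ p < ∞ and p₁ = 1, then Y₊ is compactly embedded in L^p(0,T;A₁): every
[·]_{Y₊}-bounded sequence in Y₊ has a subsequence converging in L^p(0,T;A₁). -/
theorem stmt7
    {A₁ : Type*} [NormedAddCommGroup A₁] [NormedSpace ℝ A₁] [CompleteSpace A₁]
    (T : ℝ) (hT : 0 < T)
    -- M₊ = S is a seminormed nonnegative cone in A₁ with seminorm ν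
    (S : Set A₁) (ν : A₁ → ℝ)
    (hcone : ∀ φ ∈ S, ∀ c : ℝ, 0 ≤ c → c • φ ∈ S)
    (hν0 : ∀ φ ∈ S, 0 ≤ ν φ)
    (hνeq0 : ∀ φ ∈ S, (ν φ = 0 ↔ φ = 0))
    (hνhom : ∀ φ ∈ S, ∀ c : ℝ, 0 ≤ c → ν (c • φ) = c * ν φ)
    -- M₊ is embedded in A₁
    (hemb : ∃ K₀ > (0 : ℝ), ∀ φ ∈ S, ‖φ‖ ≤ K₀ * ν φ)
    -- the embedding of M₊ in A₁ is compact
    (hcpt : ∀ a : ℕ → A₁, (∀ n, a n ∈ S) → (∃ K : ℝ, ∀ n, ν (a n) ≤ K) →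
      ∃ (ψ : ℕ → ℕ) (l : A₁), StrictMono ψ ∧
        Tendsto (fun n => a (ψ n)) atTop (𝓝 l))
    -- 1 ≤ p < ∞ and p₁ = 1
    (p : ℝ≥0∞) (hp : 1 ≤ p) (hp' : p ≠ ⊤)
    -- (u_n) is a sequence in Y₊, with derivatives (w_n)
    (u : ℕ → ℝ → A₁) (w : ℕ → ℝ → A₁)
    (huS : ∀ n, ∀ t ∈ Set.Icc (0 : ℝ) T, u n t ∈ S)
    (humeas : ∀ n, AEStronglyMeasurable (u n) (volume.restrict (Set.Ioc (0 : ℝ) T)))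
    (hνmeas : ∀ n, AEMeasurable (fun t => ν (u n t)) (volume.restrict (Set.Ioc (0 : ℝ) T)))
    (hwint : ∀ n, IntegrableOn (w n) (Set.Ioc (0 : ℝ) T))
    (hrep : ∀ n, ∀ᵐ t ∂volume.restrict (Set.Icc (0 : ℝ) T),
      u n t = u n 0 + ∫ s in (0 : ℝ)..t, w n s)
    -- the sequence is bounded in Y₊: sup_n [u_n]_{Y₊} < ∞
    (K : ℝ)
    (hbound : ∀ n,
      eLpNorm (fun t => ν (u n t)) p (volume.restrict (Set.Ioc (0 : ℝ) T))
        + eLpNorm (w n) 1 (volume.restrict (Set.Ioc (0 : ℝ) T)) ≤ ENNReal.ofReal K) :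
    ∃ ψ : ℕ → ℕ, StrictMono ψ ∧
      ∃ g : ℝ → A₁,
        Tendsto
          (fun j => eLpNorm (fun t => u (ψ j) t - g t) p (volume.restrict (Set.Ioc (0 : ℝ) T)))
          atTop (𝓝 0) :=
  stmt7_general T hT S ν hemb hcpt p hp hp' u w huS humeas hwint hrep K hbound
end

section
/- (Dubinskiĭ's theorem for seminormed sets, case (a).) Let T > 0, let A₀ and A₁ be real Banach spaces with A₀ continuously embedded in A₁, and let M be a seminormed set in A₀ that is compactly embedded in A₀. Let 1 ≤ p ≤ ∞ and 1 < p₁ ≤ ∞. Then Y is compactly embedded in L^p(0,T; A₀): every sequence (u_n) in Y with sup_n [u_n]_Y < ∞ has a subsequence that converges in the norm of L^p(0,T; A₀). -/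
/-!
Write `ι (u n t) = v n t := ι (u n 0) + ∫₀ᵗ w n`. Since `1 < p₁`, Hölder's inequality makes the
`v n` uniformly Hölder continuous with exponent `1 - 1/p₁`. By Chebyshev's inequality every short
window of `[0, T]` contains a time `τ` with `ν (u n τ) ≤ R`, where `v n τ` lies in the image under
`ι` of the relatively compact set `{ν ≤ R}`; together with equicontinuity this puts all values of
all `v n` in a totally bounded set, and Arzelà–Ascoli gives a subsequence along which `ι ∘ u n`
is uniformly Cauchy. Ehrling's inequality
`‖φ - ψ‖ ≤ ε (ν φ + ν ψ) + C_ε ‖ι φ - ι ψ‖` on `S`, which follows from the compactness of the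
embedding and the injectivity of `ι`, turns this into the Cauchy property in `L^p(0, T; A₀)`.
-/

open Filter Topology MeasureTheory Set Function
open scoped ENNReal NNReal Interval BoundedContinuousFunction

theorem totallyBounded_of_forall_exists_cauchySeq {X : Type*} [PseudoMetricSpace X] {s : Set X}
    (h : ∀ u : ℕ → X, (∀ n, u n ∈ s) → ∃ φ : ℕ → ℕ, StrictMono φ ∧ CauchySeq (u ∘ φ)) :
    TotallyBounded s := by
  refine Metric.totallyBounded_iff.2 fun ε hε => ?_
  by_contra! hcover
  obtain ⟨u, hu⟩ : ∃ u : ℕ → X, ∀ n, u n ∈ s ∧ ∀ y ∈ u '' Iio n, ε ≤ dist (u n) y := by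
    refine seq_of_forall_finite_exists (P := fun x t => x ∈ s ∧ ∀ y ∈ t, ε ≤ dist x y)
      fun t ht => ?_
    obtain ⟨x, hxs, hx⟩ := not_subset.1 (hcover t ht)
    simp only [mem_iUnion, Metric.mem_ball, not_exists, not_lt] at hx
    exact ⟨x, hxs, hx⟩
  obtain ⟨φ, hφ, hcau⟩ := h u fun n => (hu n).1
  obtain ⟨N, hN⟩ := Metric.cauchySeq_iff.1 hcau ε hε
  exact (hN (N + 1) N.le_succ N le_rfl).not_ge
    ((hu _).2 _ (mem_image_of_mem u (hφ N.lt_succ_self)))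

theorem IsCompact.exists_dist_le_add_mul_dist {X Y : Type*} [MetricSpace X] [MetricSpace Y]
    {K : Set X} (hK : IsCompact K) {f : X → Y} (hf : ContinuousOn f K) (hinj : InjOn f K)
    {ε : ℝ} (hε : 0 < ε) :
    ∃ C ≥ 0, ∀ x ∈ K, ∀ y ∈ K, dist x y ≤ ε + C * dist (f x) (f y) := by
  have : CompactSpace K := isCompact_iff_compactSpace.1 hK
  have hemb : Topology.IsEmbedding (K.domRestrict f) :=
    (hf.domRestrict.isClosedEmbedding hinj.injective).isEmbedding
  have : CompactSpace (range (K.domRestrict f)) :=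
    isCompact_iff_compactSpace.1 (isCompact_range hemb.continuous)
  -- the inverse of `f` on the compact set `f '' K` is uniformly continuous
  obtain ⟨δ, hδ, hinv⟩ := Metric.uniformContinuous_iff.1
    (CompactSpace.uniformContinuous_of_continuous hemb.toHomeomorph.symm.continuous) ε hε
  refine ⟨Metric.diam K / δ, by positivity, fun x hx y hy => ?_⟩
  have hC : 0 ≤ Metric.diam K / δ * dist (f x) (f y) := by positivity
  by_cases hxy : dist (f x) (f y) < δ
  · have := @hinv (hemb.toHomeomorph ⟨x, hx⟩) (hemb.toHomeomorph ⟨y, hy⟩) hxy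
    simp only [Homeomorph.symm_apply_apply, Subtype.dist_eq] at this
    linarith
  · calc dist x y ≤ Metric.diam K := Metric.dist_le_diam_of_mem hK.isBounded hx hy
      _ ≤ Metric.diam K / δ * dist (f x) (f y) := by
        rw [div_mul_eq_mul_div, le_div_iff₀ hδ]
        exact mul_le_mul_of_nonneg_left (not_lt.1 hxy) Metric.diam_nonneg
      _ ≤ ε + _ := by linarith

theorem totallyBounded_iUnion_range_of_uniformEquicontinuous {ι X Y : Type*}
    [PseudoMetricSpace X] [PseudoMetricSpace Y] {f : ι → X → Y} (hf : UniformEquicontinuous f)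
    (hZ : ∀ δ > 0, ∃ Z : Set Y, TotallyBounded Z ∧ ∀ i x, ∃ y, dist x y < δ ∧ f i y ∈ Z) :
    TotallyBounded (⋃ i, range (f i)) := by
  refine Metric.totallyBounded_iff.2 fun ε hε => ?_
  obtain ⟨δ, hδ, hfδ⟩ := Metric.uniformEquicontinuous_iff.1 hf (ε / 2) (half_pos hε)
  obtain ⟨Z, hZtb, hfZ⟩ := hZ δ hδ
  obtain ⟨t, ht, hZt⟩ := Metric.totallyBounded_iff.1 hZtb (ε / 2) (half_pos hε)
  refine ⟨t, ht, ?_⟩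
  rintro _ ⟨_, ⟨i, rfl⟩, x, rfl⟩
  obtain ⟨y, hxy, hy⟩ := hfZ i x
  obtain ⟨z, hz, hyz⟩ := mem_iUnion₂.1 (hZt hy)
  refine mem_iUnion₂.2 ⟨z, hz, ?_⟩
  calc dist (f i x) z ≤ dist (f i x) (f i y) + dist (f i y) z := dist_triangle _ _ _
    _ < ε / 2 + ε / 2 := add_lt_add (hfδ x y hxy i) hyz
    _ = ε := add_halves ε

theorem exists_subseq_uniformCauchySeqOn_of_equicontinuous {X Y : Type*} [TopologicalSpace X]
    [CompactSpace X] [MetricSpace Y] [CompleteSpace Y] {f : ℕ → X → Y} (hf : Equicontinuous f)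
    (hrange : TotallyBounded (⋃ n, range (f n))) :
    ∃ σ : ℕ → ℕ, StrictMono σ ∧ UniformCauchySeqOn (fun k => f (σ k)) atTop univ := by
  let F : ℕ → X →ᵇ Y := fun n => .mkOfCompact ⟨f n, hf.continuous n⟩
  have hF : Equicontinuous ((↑) : range F → X → Y) := by
    convert hf.comp (rangeSplitting F) with g
    rw [comp_apply, ← apply_rangeSplitting F g]
    rfl
  have hcpt : IsCompact (closure (range F)) :=
    BoundedContinuousFunction.arzela_ascoli _
      (hrange.closure.isCompact_of_isClosed isClosed_closure) (range F)
      (fun _ x ⟨n, hn⟩ => subset_closure (mem_iUnion.2 ⟨n, x, by simp [← hn, F]⟩)) hF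
  obtain ⟨g, -, σ, hσ, hlim⟩ := hcpt.tendsto_subseq fun n => subset_closure (mem_range_self n)
  exact ⟨σ, hσ, (tendstoUniformlyOn_univ.2
    (BoundedContinuousFunction.tendsto_iff_tendstoUniformly.1 hlim)).uniformCauchySeqOn⟩

theorem ENNReal.one_sub_toReal_inv_nonneg {p : ℝ≥0∞} (hp : 1 ≤ p) : 0 ≤ 1 - p.toReal⁻¹ := by
  rw [sub_nonneg, ← ENNReal.toReal_inv]
  exact ENNReal.toReal_le_of_le_ofReal zero_le_one (by simpa using ENNReal.inv_le_one.2 hp)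

theorem ENNReal.one_sub_toReal_inv_pos {p : ℝ≥0∞} (hp : 1 < p) : 0 < 1 - p.toReal⁻¹ := by
  rw [sub_pos, ← ENNReal.toReal_inv]
  exact ENNReal.toReal_lt_of_lt_ofReal (by simpa using ENNReal.inv_lt_one.2 hp)

theorem enorm_intervalIntegral_le_eLpNorm_mul_rpow {E : Type*} [NormedAddCommGroup E]
    [NormedSpace ℝ E] {w : ℝ → E} {a b : ℝ} {p : ℝ≥0∞}
    (hp : 1 ≤ p) (hw : AEStronglyMeasurable w (volume.restrict (Ι a b))) :
    ‖∫ x in a..b, w x‖ₑ ≤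
      eLpNorm w p (volume.restrict (Ι a b)) * ENNReal.ofReal |b - a| ^ (1 - p.toReal⁻¹) := by
  calc ‖∫ x in a..b, w x‖ₑ = ‖∫ x in Ι a b, w x‖ₑ := by
        simp only [← ofReal_norm, intervalIntegral.norm_integral_eq_norm_integral_uIoc]
    _ ≤ eLpNorm w 1 (volume.restrict (Ι a b)) :=
        (enorm_integral_le_lintegral_enorm _).trans_eq eLpNorm_one_eq_lintegral_enorm.symm
    _ ≤ _ := by
        simpa using eLpNorm_le_eLpNorm_mul_rpow_measure_univ hp hw

theorem dist_intervalIntegral_le_mul_rpow {E : Type*} [NormedAddCommGroup E]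
    [NormedSpace ℝ E] {w : ℝ → E} {a b : ℝ} {p : ℝ≥0∞} (hp : 1 ≤ p)
    (hw : IntegrableOn w (Ioc a b)) {K : ℝ≥0} (hK : eLpNorm w p (volume.restrict (Ioc a b)) ≤ K)
    {s t : ℝ} (hs : s ∈ Icc a b) (ht : t ∈ Icc a b) :
    dist (∫ x in a..s, w x) (∫ x in a..t, w x) ≤ K * dist s t ^ (1 - p.toReal⁻¹) := by
  have hsub : ∀ {x y}, x ∈ Icc a b → y ∈ Icc a b → Ι x y ⊆ Ioc a b := fun hx hy =>
    Ioc_subset_Ioc (le_min hx.1 hy.1) (max_le hx.2 hy.2)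
  have hint : ∀ {x}, x ∈ Icc a b → IntervalIntegrable w volume a x := fun hx =>
    intervalIntegrable_iff.2 (hw.mono_set (hsub (left_mem_Icc.2 (hx.1.trans hx.2)) hx))
  rw [dist_eq_norm, intervalIntegral.integral_interval_sub_left (hint hs) (hint ht),
    ← ENNReal.ofReal_le_ofReal_iff (by positivity), ofReal_norm, ENNReal.ofReal_mul K.coe_nonneg,
    ← ENNReal.ofReal_rpow_of_nonneg dist_nonneg (ENNReal.one_sub_toReal_inv_nonneg hp),
    Real.dist_eq, ENNReal.ofReal_coe_nnreal]
  calc ‖∫ x in t..s, w x‖ₑ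
      ≤ eLpNorm w p (volume.restrict (Ι t s)) * ENNReal.ofReal |s - t| ^ (1 - p.toReal⁻¹) :=
        enorm_intervalIntegral_le_eLpNorm_mul_rpow hp (hw.mono_set (hsub ht hs)).1
    _ ≤ K * ENNReal.ofReal |s - t| ^ (1 - p.toReal⁻¹) := by
        gcongr
        exact (eLpNorm_mono_measure _ (Measure.restrict_mono (hsub ht hs) le_rfl)).trans hK

theorem exists_forall_measure_lt_of_eLpNorm_le {α ι : Type*} [MeasurableSpace α]
    {μ : Measure α} [IsFiniteMeasure μ] {p : ℝ≥0∞} (hp : 1 ≤ p) {f : ι → α → ℝ}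
    (hf : ∀ i, AEStronglyMeasurable (f i) μ) {K : ℝ≥0} (hK : ∀ i, eLpNorm (f i) p μ ≤ K)
    {δ : ℝ≥0∞} (hδ : δ ≠ 0) : ∃ R : ℝ, ∀ i, μ {x | R < f i x} < δ := by
  -- going through the `L¹` norm covers `p = ∞` as well
  set B := (K : ℝ≥0∞) * μ univ ^ (1 - p.toReal⁻¹)
  have hB : ∀ i, eLpNorm (f i) 1 μ ≤ B := fun i => by
    simpa using (eLpNorm_le_eLpNorm_mul_rpow_measure_univ hp (hf i)).trans
      (mul_le_mul_left (hK i) _)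
  obtain ⟨n, hn⟩ := ENNReal.exists_nat_mul_gt hδ (ENNReal.mul_ne_top ENNReal.coe_ne_top
    (ENNReal.rpow_ne_top_of_nonneg (ENNReal.one_sub_toReal_inv_nonneg hp) (measure_ne_top μ _)))
  refine ⟨n, fun i => lt_of_mul_lt_mul_left' (a := (n : ℝ≥0∞)) ?_⟩
  calc (n : ℝ≥0∞) * μ {x | n < f i x} ≤ n * μ {x | (n : ℝ≥0∞) ≤ ‖f i x‖ₑ} := by
        refine mul_le_mul_right (measure_mono fun x hx => ?_) _
        change (n : ℝ≥0∞) ≤ ‖f i x‖ₑ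
        rw [← ofReal_norm, ← ENNReal.ofReal_natCast]
        exact ENNReal.ofReal_le_ofReal ((le_of_lt hx).trans (le_abs_self _))
    _ ≤ eLpNorm (f i) 1 μ := by
        simpa using mul_meas_ge_le_pow_eLpNorm' μ one_ne_zero ENNReal.one_ne_top (hf i) n
    _ ≤ B := hB i
    _ < n * δ := hn

theorem exists_forall_exists_mem_Ioc_le {ι : Type*} {T : ℝ} {p : ℝ≥0∞} (hp : 1 ≤ p)
    {f : ι → ℝ → ℝ} (hf : ∀ i, AEStronglyMeasurable (f i) (volume.restrict (Ioc 0 T)))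
    {K : ℝ≥0} (hK : ∀ i, eLpNorm (f i) p (volume.restrict (Ioc 0 T)) ≤ K) {P : ι → ℝ → Prop}
    (hP : ∀ i, ∀ᵐ t ∂volume.restrict (Ioc 0 T), P i t) {r : ℝ} (hr : 0 < r) :
    ∃ R : ℝ, ∀ i a, 0 ≤ a → a + r ≤ T → ∃ τ ∈ Ioc a (a + r), f i τ ≤ R ∧ P i τ := by
  obtain ⟨R, hR⟩ := exists_forall_measure_lt_of_eLpNorm_le hp hf hK (ENNReal.ofReal_pos.2 hr).ne'
  refine ⟨R, fun i a ha haT => ?_⟩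
  by_contra! hbad
  have hcover : Ioc a (a + r) ⊆ {t | R < f i t} ∪ {t | ¬ P i t} := fun τ hτ => by
    by_cases hτR : f i τ ≤ R
    · exact Or.inr (hbad τ hτ hτR)
    · exact Or.inl (not_le.1 hτR)
  have := (measure_mono (μ := volume.restrict (Ioc 0 T)) hcover).trans (measure_union_le _ _)
  rw [Measure.restrict_eq_self _ (Ioc_subset_Ioc ha haT), Real.volume_Ioc, add_sub_cancel_left,
    ae_iff.1 (hP i), add_zero] at this
  exact (hR i).not_ge this

theorem exists_tendsto_eLpNorm_sub_of_tendsto_eLpNorm_sub {α E : Type*} [MeasurableSpace α]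
    {μ : Measure α} [NormedAddCommGroup E] [CompleteSpace E] {p : ℝ≥0∞} (hp : 1 ≤ p)
    {f : ℕ → α → E} (hf : ∀ n, MemLp (f n) p μ)
    (hcau : Tendsto (fun kl : ℕ × ℕ => eLpNorm (f kl.1 - f kl.2) p μ) atTop (𝓝 0)) :
    ∃ g : α → E, Tendsto (fun n => eLpNorm (f n - g) p μ) atTop (𝓝 0) := by
  have : Fact (1 ≤ p) := ⟨hp⟩
  let F : ℕ → Lp E p μ := fun n => (hf n).toLp
  have hF : CauchySeq F := by
    refine cauchySeq_iff_tendsto_dist_atTop_0.2 <|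
      ((ENNReal.tendsto_toReal ENNReal.zero_ne_top).comp hcau).congr fun kl => ?_
    rw [Lp.dist_def, comp_apply,
      eLpNorm_congr_ae ((hf kl.1).coeFn_toLp.sub (hf kl.2).coeFn_toLp)]
  obtain ⟨G, hG⟩ := cauchySeq_tendsto_of_complete hF
  refine ⟨G, ((Lp.tendsto_Lp_iff_tendsto_eLpNorm' F G).1 hG).congr fun n => ?_⟩
  exact eLpNorm_congr_ae ((hf n).coeFn_toLp.sub EventuallyEq.rfl)

structure IsSeminormedSet {E : Type*} [AddCommGroup E] [Module ℝ E] (S : Set E) (ν : E → ℝ) :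
    Prop where
  smul_mem : ∀ φ ∈ S, ∀ c : ℝ, c • φ ∈ S
  nonneg : ∀ φ ∈ S, 0 ≤ ν φ
  eq_zero_iff : ∀ φ ∈ S, ν φ = 0 ↔ φ = 0
  apply_smul : ∀ φ ∈ S, ∀ c : ℝ, ν (c • φ) = |c| * ν φ

namespace IsSeminormedSet

variable {E F : Type*} [NormedAddCommGroup E] [NormedSpace ℝ E]
  [NormedAddCommGroup F] [NormedSpace ℝ F] {S : Set E} {ν : E → ℝ}

theorem exists_norm_sub_le_add_mul_norm_sub (hS : IsSeminormedSet S ν)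
    (hcpt : IsCompact (closure {φ | φ ∈ S ∧ ν φ ≤ 1})) (ι : E →L[ℝ] F) (hι : Injective ι)
    {ε : ℝ} (hε : 0 < ε) :
    ∃ C ≥ 0, ∀ φ ∈ S, ∀ ψ ∈ S, ‖φ - ψ‖ ≤ ε * (ν φ + ν ψ) + C * ‖ι φ - ι ψ‖ := by
  obtain ⟨C, hC, hCK⟩ :=
    hcpt.exists_dist_le_add_mul_dist ι.continuous.continuousOn hι.injOn hε
  refine ⟨C, hC, fun φ hφ ψ hψ => ?_⟩
  set s := ν φ + ν ψ
  have hs0 : 0 ≤ s := add_nonneg (hS.nonneg φ hφ) (hS.nonneg ψ hψ)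
  rcases hs0.eq_or_lt with hs | hs
  · have hφ0 : φ = 0 := (hS.eq_zero_iff φ hφ).1 (by linarith [hS.nonneg φ hφ, hS.nonneg ψ hψ])
    have hψ0 : ψ = 0 := (hS.eq_zero_iff ψ hψ).1 (by linarith [hS.nonneg φ hφ, hS.nonneg ψ hψ])
    simp only [hφ0, hψ0, sub_self, norm_zero, map_zero, mul_zero, add_zero]
    exact mul_nonneg hε.le hs.le
  -- rescale so that `ν φ + ν ψ = 1`
  have hmem : ∀ χ ∈ S, ν χ ≤ s → s⁻¹ • χ ∈ closure {φ | φ ∈ S ∧ ν φ ≤ 1} := fun χ hχ hχs =>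
    subset_closure ⟨hS.smul_mem χ hχ _, by
      rw [hS.apply_smul χ hχ, abs_of_pos (inv_pos.2 hs), inv_mul_le_iff₀ hs, mul_one]
      exact hχs⟩
  have key := hCK _ (hmem φ hφ (le_add_of_nonneg_right (hS.nonneg ψ hψ)))
    _ (hmem ψ hψ (le_add_of_nonneg_left (hS.nonneg φ hφ)))
  rw [dist_eq_norm, dist_eq_norm, map_smul, map_smul, ← smul_sub, ← smul_sub, norm_smul,
    norm_smul, Real.norm_of_nonneg (inv_pos.2 hs).le] at key
  calc ‖φ - ψ‖ = s * (s⁻¹ * ‖φ - ψ‖) := (mul_inv_cancel_left₀ hs.ne' _).symm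
    _ ≤ s * (ε + C * (s⁻¹ * ‖ι φ - ι ψ‖)) := by gcongr
    _ = ε * s + C * ‖ι φ - ι ψ‖ := by field_simp [hs.ne']

theorem tendsto_eLpNorm_sub_of_uniformCauchy {α : Type*} [MeasurableSpace α] {μ : Measure α}
    [IsFiniteMeasure μ] (hS : IsSeminormedSet S ν)
    (hcpt : IsCompact (closure {φ | φ ∈ S ∧ ν φ ≤ 1})) (ι : E →L[ℝ] F) (hι : Injective ι)
    {p : ℝ≥0∞} (hp : 1 ≤ p) {u : ℕ → α → E} (huS : ∀ n, ∀ᵐ x ∂μ, u n x ∈ S)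
    (hν : ∀ n, AEStronglyMeasurable (fun x => ν (u n x)) μ) {K : ℝ≥0}
    (hK : ∀ n, eLpNorm (fun x => ν (u n x)) p μ ≤ K)
    (hcau : ∀ η > 0, ∀ᶠ kl : ℕ × ℕ in atTop, ∀ᵐ x ∂μ, dist (ι (u kl.1 x)) (ι (u kl.2 x)) < η) :
    Tendsto (fun kl : ℕ × ℕ => eLpNorm (u kl.1 - u kl.2) p μ) atTop (𝓝 0) := by
  set B : ℝ≥0∞ := K + K + eLpNorm (fun _ => (1 : ℝ)) p μ
  have hB : B ≠ ∞ := by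
    simp only [B, ne_eq, ENNReal.add_eq_top, ENNReal.coe_ne_top, or_self, false_or]
    exact (memLp_const 1).eLpNorm_ne_top
  have key : ∀ ε > 0, ∀ᶠ kl : ℕ × ℕ in atTop,
      eLpNorm (u kl.1 - u kl.2) p μ ≤ ENNReal.ofReal ε * B := by
    intro ε hε
    obtain ⟨C, hC, hCε⟩ := hS.exists_norm_sub_le_add_mul_norm_sub hcpt ι hι hε
    filter_upwards [hcau (ε / (C + 1)) (by positivity)] with ⟨k, l⟩ hkl
    set g : ℕ → α → ℝ := fun n x => ν (u n x)
    set h : α → ℝ := g k + g l + fun _ => 1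
    have hpt : ∀ᵐ x ∂μ, ‖(u k - u l) x‖ ≤ (ε • h) x := by
      filter_upwards [hkl, huS k, huS l] with x hx hk hl
      have : C * ‖ι (u k x) - ι (u l x)‖ ≤ ε := by
        rw [dist_eq_norm, lt_div_iff₀ (by positivity)] at hx
        nlinarith [norm_nonneg (ι (u k x) - ι (u l x))]
      simp only [Pi.sub_apply, Pi.smul_apply, Pi.add_apply, smul_eq_mul, h, g]
      linarith [hCε _ hk _ hl]
    calc eLpNorm (u k - u l) p μ ≤ eLpNorm (ε • h) p μ :=
          eLpNorm_mono_ae_real hpt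
      _ ≤ ENNReal.ofReal ε * B := by
        rw [eLpNorm_const_smul, Real.enorm_of_nonneg hε.le]
        gcongr
        refine (eLpNorm_add_le ((hν k).add (hν l)) aestronglyMeasurable_const hp).trans
          (add_le_add ?_ le_rfl)
        exact (eLpNorm_add_le (hν k) (hν l) hp).trans (add_le_add (hK k) (hK l))
  have hlim : Tendsto (fun ε : ℝ => ENNReal.ofReal ε * B) (𝓝[>] 0) (𝓝 0) := by
    have h0 : Tendsto (fun ε : ℝ => ε) (𝓝[>] 0) (𝓝 0) :=
      tendsto_nhdsWithin_of_tendsto_nhds tendsto_id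
    simpa using ENNReal.Tendsto.mul_const (ENNReal.tendsto_ofReal h0) (Or.inr hB)
  refine ENNReal.tendsto_nhds_zero.2 fun δ hδ => ?_
  obtain ⟨ε, hεδ, hε⟩ := ((hlim.eventually (Iic_mem_nhds hδ)).and self_mem_nhdsWithin).exists
  exact (key ε hε).mono fun kl h => h.trans hεδ

end IsSeminormedSet

theorem exists_subseq_forall_ae_dist_lt {A₀ A₁ : Type*} [NormedAddCommGroup A₀]
    [NormedAddCommGroup A₁] [NormedSpace ℝ A₁] [CompleteSpace A₁] {ι : A₀ → A₁}
    (hι : UniformContinuous ι) {T : ℝ} (hT : 0 < T) {S : Set A₀} {ν : A₀ → ℝ}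
    (hball : ∀ R, TotallyBounded {φ | φ ∈ S ∧ ν φ ≤ R}) {p p₁ : ℝ≥0∞} (hp : 1 ≤ p)
    (hp₁ : 1 < p₁) {u : ℕ → ℝ → A₀} {w : ℕ → ℝ → A₁} (huS : ∀ n, ∀ t ∈ Icc 0 T, u n t ∈ S)
    (hν : ∀ n, AEStronglyMeasurable (fun t => ν (u n t)) (volume.restrict (Ioc 0 T)))
    (hw : ∀ n, IntegrableOn (w n) (Ioc 0 T))
    (hrep : ∀ n, ∀ᵐ t ∂volume.restrict (Ioc 0 T), ι (u n t) = ι (u n 0) + ∫ s in 0..t, w n s)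
    {K : ℝ≥0} (hνK : ∀ n, eLpNorm (fun t => ν (u n t)) p (volume.restrict (Ioc 0 T)) ≤ K)
    (hwK : ∀ n, eLpNorm (w n) p₁ (volume.restrict (Ioc 0 T)) ≤ K) :
    ∃ σ : ℕ → ℕ, StrictMono σ ∧ ∀ η > 0, ∀ᶠ kl : ℕ × ℕ in atTop,
      ∀ᵐ t ∂volume.restrict (Ioc 0 T), dist (ι (u (σ kl.1) t)) (ι (u (σ kl.2) t)) < η := by
  set α := 1 - p₁.toReal⁻¹
  have hα : 0 < α := ENNReal.one_sub_toReal_inv_pos hp₁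
  let v : ℕ → Icc 0 T → A₁ := fun n t => ι (u n 0) + ∫ s in 0..(t : ℝ), w n s
  have hequi : UniformEquicontinuous v := by
    refine Metric.uniformEquicontinuous_of_continuity_modulus (fun r => K * r ^ α) ?_ v
      fun s t n => ?_
    · simpa [hα.ne'] using
        (tendsto_const_nhds.mul (Real.continuousAt_rpow_const 0 α (Or.inr hα.le)).tendsto)
    · rw [dist_add_left]
      exact dist_intervalIntegral_le_mul_rpow hp₁.le (hw n) (hwK n) s.2 t.2
  have hgood : ∀ δ > 0, ∃ Z, TotallyBounded Z ∧ ∀ n t, ∃ τ, dist t τ < δ ∧ v n τ ∈ Z := by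
    intro δ hδ
    set r := min (δ / 2) T
    have hr : 0 < r := lt_min (half_pos hδ) hT
    have hrδ : r ≤ δ / 2 := min_le_left _ _
    have hrT : r ≤ T := min_le_right _ _
    obtain ⟨R, hR⟩ := exists_forall_exists_mem_Ioc_le hp hν hνK hrep hr
    refine ⟨ι '' {φ | φ ∈ S ∧ ν φ ≤ R}, (hball R).image hι, fun n t => ?_⟩
    set a := min (t : ℝ) (T - r)
    have h0a : 0 ≤ a := le_min t.2.1 (by linarith)
    have haT : a + r ≤ T := by linarith [min_le_right (t : ℝ) (T - r)]
    have hta : (t : ℝ) - r ≤ a := le_min (by linarith) (by linarith [t.2.2])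
    obtain ⟨τ, hτ, hτR, hτv⟩ := hR n a h0a haT
    have hτT : τ ∈ Icc 0 T := ⟨h0a.trans hτ.1.le, hτ.2.trans haT⟩
    refine ⟨⟨τ, hτT⟩, ?_, u n τ, ⟨huS n τ hτT, hτR⟩, hτv⟩
    change |(t : ℝ) - τ| < δ
    rw [abs_lt]
    constructor <;> linarith [hτ.1, hτ.2, min_le_left (t : ℝ) (T - r)]
  obtain ⟨σ, hσ, hcau⟩ := exists_subseq_uniformCauchySeqOn_of_equicontinuous hequi.equicontinuous
    (totallyBounded_iUnion_range_of_uniformEquicontinuous hequi hgood)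
  refine ⟨σ, hσ, fun η hη => ?_⟩
  rw [← prod_atTop_atTop_eq]
  filter_upwards [hcau _ (Metric.dist_mem_uniformity hη)] with kl hkl
  filter_upwards [ae_restrict_mem measurableSet_Ioc, hrep (σ kl.1), hrep (σ kl.2)] with t ht h₁ h₂
  rw [h₁, h₂]
  exact hkl ⟨t, Ioc_subset_Icc_self ht⟩ (mem_univ _)

theorem stmt10_general
    {A₀ A₁ : Type*} [NormedAddCommGroup A₀] [NormedSpace ℝ A₀] [CompleteSpace A₀]
    [NormedAddCommGroup A₁] [NormedSpace ℝ A₁] [CompleteSpace A₁]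
    -- A₀ is continuously embedded in A₁ via the injective linear map `ι`
    (ι : A₀ →ₗ[ℝ] A₁) (hι : Function.Injective ι)
    (C : ℝ) (hιC : ∀ a : A₀, ‖ι a‖ ≤ C * ‖a‖)
    (T : ℝ) (hT : 0 < T)
    -- M = S is a seminormed set in A₀ with seminorm ν
    (S : Set A₀) (ν : A₀ → ℝ)
    (hcone : ∀ φ ∈ S, ∀ c : ℝ, c • φ ∈ S)
    (hν0 : ∀ φ ∈ S, 0 ≤ ν φ)
    (hνeq0 : ∀ φ ∈ S, (ν φ = 0 ↔ φ = 0))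
    (hνhom : ∀ φ ∈ S, ∀ c : ℝ, ν (c • φ) = |c| * ν φ)
    -- M is embedded in A₀
    (hemb : ∃ K₀ > (0 : ℝ), ∀ φ ∈ S, ‖φ‖ ≤ K₀ * ν φ)
    -- the embedding of M in A₀ is compact
    (hcpt : ∀ a : ℕ → A₀, (∀ n, a n ∈ S) → (∃ K : ℝ, ∀ n, ν (a n) ≤ K) →
      ∃ (ψ : ℕ → ℕ) (l : A₀), StrictMono ψ ∧
        Tendsto (fun n => a (ψ n)) atTop (𝓝 l))
    -- 1 ≤ p ≤ ∞ and 1 < p₁ ≤ ∞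
    (p p₁ : ℝ≥0∞) (hp : 1 ≤ p) (hp₁ : 1 < p₁)
    -- (u_n) is a sequence in Y, with derivatives (w_n) taking values in A₁
    (u : ℕ → ℝ → A₀) (w : ℕ → ℝ → A₁)
    (huS : ∀ n, ∀ t ∈ Set.Icc (0 : ℝ) T, u n t ∈ S)
    (humeas : ∀ n, AEStronglyMeasurable (u n) (volume.restrict (Set.Ioc (0 : ℝ) T)))
    (hνmeas : ∀ n, AEMeasurable (fun t => ν (u n t)) (volume.restrict (Set.Ioc (0 : ℝ) T)))
    (hwint : ∀ n, IntegrableOn (w n) (Set.Ioc (0 : ℝ) T))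
    (hrep : ∀ n, ∀ᵐ t ∂volume.restrict (Set.Icc (0 : ℝ) T),
      ι (u n t) = ι (u n 0) + ∫ s in (0 : ℝ)..t, w n s)
    -- the sequence is bounded in Y₊: sup_n [u_n]_Y < ∞
    (K : ℝ)
    (hbound : ∀ n,
      eLpNorm (fun t => ν (u n t)) p (volume.restrict (Set.Ioc (0 : ℝ) T))
        + eLpNorm (w n) p₁ (volume.restrict (Set.Ioc (0 : ℝ) T)) ≤ ENNReal.ofReal K) :
    ∃ ψ : ℕ → ℕ, StrictMono ψ ∧
      ∃ g : ℝ → A₀,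
        Tendsto
          (fun j => eLpNorm (fun t => u (ψ j) t - g t) p (volume.restrict (Set.Ioc (0 : ℝ) T)))
          atTop (𝓝 0) := by
  obtain ⟨K₀, -, hK₀⟩ := hemb
  set μ := volume.restrict (Ioc (0 : ℝ) T)
  let ι' : A₀ →L[ℝ] A₁ := ι.mkContinuous C hιC
  have hS : IsSeminormedSet S ν := ⟨hcone, hν0, hνeq0, hνhom⟩
  have hball (R : ℝ) : TotallyBounded {φ | φ ∈ S ∧ ν φ ≤ R} :=
    totallyBounded_of_forall_exists_cauchySeq fun a ha => by
      obtain ⟨ψ, l, hψ, hl⟩ := hcpt a (fun n => (ha n).1) ⟨R, fun n => (ha n).2⟩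
      exact ⟨ψ, hψ, hl.cauchySeq⟩
  have huS' (n : ℕ) : ∀ᵐ t ∂μ, u n t ∈ S :=
    (ae_restrict_mem measurableSet_Ioc).mono fun t ht => huS n t (Ioc_subset_Icc_self ht)
  have hν (n : ℕ) := (hνmeas n).aestronglyMeasurable
  have hνK (n : ℕ) : eLpNorm (fun t => ν (u n t)) p μ ≤ K.toNNReal := le_self_add.trans (hbound n)
  have hwK (n : ℕ) : eLpNorm (w n) p₁ μ ≤ K.toNNReal := le_add_self.trans (hbound n)
  have hmem (n : ℕ) : MemLp (u n) p μ :=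
    MemLp.of_le_mul (c := K₀) ⟨hν n, (hνK n).trans_lt ENNReal.coe_lt_top⟩ (humeas n) <| by
      filter_upwards [huS' n] with t ht
      rw [Real.norm_of_nonneg (hν0 _ ht)]
      exact hK₀ _ ht
  obtain ⟨σ, hσ, hcau⟩ := exists_subseq_forall_ae_dist_lt ι'.uniformContinuous hT hball hp hp₁
    huS hν hwint (fun n => ae_restrict_of_ae_restrict_of_subset Ioc_subset_Icc_self (hrep n))
    hνK hwK
  have hι' : Injective ι' := hι
  have hcau' := hS.tendsto_eLpNorm_sub_of_uniformCauchy
      ((hball 1).closure.isCompact_of_isClosed isClosed_closure) ι' hι' hp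
      (fun k => huS' (σ k)) (fun k => hν (σ k)) (fun k => hνK (σ k)) hcau
  obtain ⟨g, hg⟩ := exists_tendsto_eLpNorm_sub_of_tendsto_eLpNorm_sub hp (fun k => hmem (σ k)) hcau'
  exact ⟨σ, hσ, g, hg⟩

/-- Dubinskiĭ's theorem, case (a): A₀ ↪ A₁ Banach spaces, M a seminormed set (in the
sense of Dubinskiĭ) compactly embedded in A₀, 1 ≤ p ≤ ∞, 1 < p₁ ≤ ∞. Then Y is compactly embedded in
L^p(0,T;A₀): every [·]_Y-bounded sequence has a subsequence converging in L^p(0,T;A₀). -/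
theorem stmt10
    {A₀ A₁ : Type*} [NormedAddCommGroup A₀] [NormedSpace ℝ A₀] [CompleteSpace A₀]
    [NormedAddCommGroup A₁] [NormedSpace ℝ A₁] [CompleteSpace A₁]
    -- A₀ is continuously embedded in A₁ via the injective linear map `ι`
    (ι : A₀ →ₗ[ℝ] A₁) (hι : Function.Injective ι)
    (C : ℝ) (hC : 0 < C) (hιC : ∀ a : A₀, ‖ι a‖ ≤ C * ‖a‖)
    (T : ℝ) (hT : 0 < T)
    -- M = S is a seminormed set in A₀ with seminorm ν
    (S : Set A₀) (ν : A₀ → ℝ)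
    (hcone : ∀ φ ∈ S, ∀ c : ℝ, c • φ ∈ S)
    (hν0 : ∀ φ ∈ S, 0 ≤ ν φ)
    (hνeq0 : ∀ φ ∈ S, (ν φ = 0 ↔ φ = 0))
    (hνhom : ∀ φ ∈ S, ∀ c : ℝ, ν (c • φ) = |c| * ν φ)
    -- M is embedded in A₀
    (hemb : ∃ K₀ > (0 : ℝ), ∀ φ ∈ S, ‖φ‖ ≤ K₀ * ν φ)
    -- the embedding of M in A₀ is compact
    (hcpt : ∀ a : ℕ → A₀, (∀ n, a n ∈ S) → (∃ K : ℝ, ∀ n, ν (a n) ≤ K) →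
      ∃ (ψ : ℕ → ℕ) (l : A₀), StrictMono ψ ∧
        Tendsto (fun n => a (ψ n)) atTop (𝓝 l))
    -- 1 ≤ p ≤ ∞ and 1 < p₁ ≤ ∞
    (p p₁ : ℝ≥0∞) (hp : 1 ≤ p) (hp₁ : 1 < p₁)
    -- (u_n) is a sequence in Y, with derivatives (w_n) taking values in A₁
    (u : ℕ → ℝ → A₀) (w : ℕ → ℝ → A₁)
    (huS : ∀ n, ∀ t ∈ Set.Icc (0 : ℝ) T, u n t ∈ S)
    (humeas : ∀ n, AEStronglyMeasurable (u n) (volume.restrict (Set.Ioc (0 : ℝ) T)))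
    (hνmeas : ∀ n, AEMeasurable (fun t => ν (u n t)) (volume.restrict (Set.Ioc (0 : ℝ) T)))
    (hwint : ∀ n, IntegrableOn (w n) (Set.Ioc (0 : ℝ) T))
    (hrep : ∀ n, ∀ᵐ t ∂volume.restrict (Set.Icc (0 : ℝ) T),
      ι (u n t) = ι (u n 0) + ∫ s in (0 : ℝ)..t, w n s)
    -- the sequence is bounded in Y₊: sup_n [u_n]_Y < ∞
    (K : ℝ)
    (hbound : ∀ n,
      eLpNorm (fun t => ν (u n t)) p (volume.restrict (Set.Ioc (0 : ℝ) T))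
        + eLpNorm (w n) p₁ (volume.restrict (Set.Ioc (0 : ℝ) T)) ≤ ENNReal.ofReal K) :
    ∃ ψ : ℕ → ℕ, StrictMono ψ ∧
      ∃ g : ℝ → A₀,
        Tendsto
          (fun j => eLpNorm (fun t => u (ψ j) t - g t) p (volume.restrict (Set.Ioc (0 : ℝ) T)))
          atTop (𝓝 0) :=
  stmt10_general ι hι C hιC T hT S ν hcone hν0 hνeq0 hνhom hemb hcpt p p₁ hp hp₁ u w huS humeas
    hνmeas hwint hrep K hbound
end

section
/- (Corollary of Maitre's theorem, case p₁ > 1.) Let T > 0, let A and A₁ be real Banach spaces, let 1 < p₁ ≤ ∞, and let B : A → A₁ be a (possibly nonlinear) compact map, i.e. B maps bounded subsets of A to relatively compact subsets of A₁. Let U be a set of strongly measurable functions u : (0,T) → A with sup_{u ∈ U} ∫₀^T ‖u(t)‖_A dt < ∞, and let V := {B∘u : u ∈ U}. Assume V is bounded in L^r(0,T; A₁) for some r > 1, and that each v ∈ V satisfies v(t) = v(0) + ∫₀ᵗ w_v(s) ds for a.e. t ∈ [0,T], where w_v ∈ L^{p₁}(0,T; A₁) and sup_{v ∈ V} ‖w_v‖_{L^{p₁}(0,T;A₁)}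 < ∞. Then V is relatively compact in C([0,T]; A₁): every sequence in V has a subsequence whose continuous representatives converge uniformly on [0,T] in the norm of A₁. -/
/-!
Each `v = B ∘ u` agrees a.e. on `[0,T]` with `G t = v 0 + ∫₀ᵗ w`, and Hölder's inequality makes
all these `G` Hölder continuous with the common exponent `1 - 1/p₁ > 0` and a common constant, so
they are equicontinuous. For the values: on a window of length `δ` next to `t` the mean of `‖u‖` is
at most `K/δ`, so the window contains a point `x` with `‖u x‖ ≤ K/δ` and `v x = G x`; hence `G t`
lies within `C δ^e` of `B (closedBall 0 (K/δ))`, which is relatively compact. So all values of all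
`G` form a totally bounded set, and the Arzelà–Ascoli theorem yields a uniformly convergent
subsequence.
-/

open Filter Topology MeasureTheory Set Metric
open scoped ENNReal NNReal BoundedContinuousFunction

theorem totallyBounded_of_forall_subset_thickening {α : Type*} [PseudoMetricSpace α] {S : Set α}
    (h : ∀ ε > 0, ∃ C, TotallyBounded C ∧ S ⊆ thickening ε C) : TotallyBounded S := by
  rw [Metric.totallyBounded_iff]
  intro ε hε
  obtain ⟨C, hC, hSC⟩ := h (ε / 2) (half_pos hε)
  obtain ⟨t, ht, hCt⟩ := Metric.totallyBounded_iff.1 hC (ε / 2) (half_pos hε)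
  refine ⟨t, ht, fun x hx => ?_⟩
  obtain ⟨c, hc, hxc⟩ := mem_thickening_iff.1 (hSC hx)
  obtain ⟨y, hy, hcy⟩ := mem_iUnion₂.1 (hCt hc)
  refine mem_iUnion₂.2 ⟨y, hy, ?_⟩
  calc dist x y ≤ dist x c + dist c y := dist_triangle _ _ _
    _ < ε / 2 + ε / 2 := add_lt_add hxc hcy
    _ = ε := add_halves ε

theorem EquicontinuousOn.exists_strictMono_tendstoUniformlyOn
    {X α : Type*} [TopologicalSpace X] [MetricSpace α] [CompleteSpace α]
    {s : Set X} (hs : IsCompact s) {F : ℕ → X → α} (hF : EquicontinuousOn F s)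
    (hFs : TotallyBounded (⋃ n, F n '' s)) :
    ∃ ψ : ℕ → ℕ, StrictMono ψ ∧ ∃ L : X → α, TendstoUniformlyOn (fun j => F (ψ j)) L atTop s := by
  classical
  have : CompactSpace s := isCompact_iff_compactSpace.mp hs
  have hF' : Equicontinuous (s.domRestrict ∘ F) := (equicontinuous_restrict_iff F).2 hF
  let Φ : ℕ → s →ᵇ α := fun n =>
    BoundedContinuousFunction.mkOfCompact ⟨s.domRestrict (F n), hF'.continuous n⟩
  have hΦ : IsCompact (closure (range Φ)) := by
    refine BoundedContinuousFunction.arzela_ascoli _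
      (hFs.closure.isCompact_of_isClosed isClosed_closure) (range Φ) ?_ ?_
    · rintro _ ⟨x, hx⟩ ⟨n, rfl⟩
      exact subset_closure (mem_iUnion.2 ⟨n, mem_image_of_mem _ hx⟩)
    · intro x U hU
      filter_upwards [hF' x U hU] with y hy
      rintro ⟨_, n, rfl⟩
      exact hy n
  obtain ⟨L₀, -, ψ, hψ, hL₀⟩ := hΦ.tendsto_subseq fun n => subset_closure (mem_range_self n)
  set L : X → α := fun x => if h : x ∈ s then L₀ ⟨x, h⟩ else F 0 x
  have hL : s.domRestrict L = L₀ := by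
    ext ⟨x, hx⟩
    simp [L, hx]
  refine ⟨ψ, hψ, L, ?_⟩
  rw [tendstoUniformlyOn_iff_restrict, hL]
  exact BoundedContinuousFunction.tendsto_iff_tendstoUniformly.1 hL₀

-- For `p = ∞` the exponent `1 - 1 / p.toReal` is `1`, since `(∞ : ℝ≥0∞).toReal = 0`.
theorem one_sub_one_div_toReal_pos {p : ℝ≥0∞} (hp : 1 < p) : 0 < 1 - 1 / p.toReal := by
  rcases eq_or_ne p ⊤ with rfl | hp_top
  · simp
  · have : 1 < p.toReal := by
      simpa using (ENNReal.toReal_lt_toReal ENNReal.one_ne_top hp_top).2 hp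
    simpa using inv_lt_one_of_one_lt₀ this

theorem one_sub_one_div_toReal_nonneg {p : ℝ≥0∞} (hp : 1 ≤ p) : 0 ≤ 1 - 1 / p.toReal := by
  rcases eq_or_ne p ⊤ with rfl | hp_top
  · simp
  · have : 1 ≤ p.toReal := by
      simpa using (ENNReal.toReal_le_toReal ENNReal.one_ne_top hp_top).2 hp
    simpa using inv_le_one_of_one_le₀ this

theorem tendsto_const_mul_rpow_nhds_zero (C : ℝ) {e : ℝ} (he : 0 < e) :
    Tendsto (fun d : ℝ => C * d ^ e) (𝓝 0) (𝓝 0) := by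
  simpa [Real.zero_rpow he.ne'] using
    ((Real.continuousAt_rpow_const 0 e (Or.inr he.le)).const_mul C).tendsto

section Holder

variable {E : Type*} [NormedAddCommGroup E] [NormedSpace ℝ E]

theorem norm_intervalIntegral_le_of_eLpNorm_le {w : ℝ → E} {p : ℝ≥0∞} (hp : 1 ≤ p) {s t : ℝ}
    {K : ℝ≥0} (hst : s ≤ t) (hw : AEStronglyMeasurable w (volume.restrict (Ioc s t)))
    (hK : eLpNorm w p (volume.restrict (Ioc s t)) ≤ K) :
    ‖∫ x in s..t, w x‖ ≤ K * (t - s) ^ (1 - 1 / p.toReal) := by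
  have hts : 0 ≤ t - s := sub_nonneg.2 hst
  rw [← ENNReal.ofReal_le_ofReal_iff (by positivity), ofReal_norm,
    ENNReal.ofReal_mul K.coe_nonneg, ENNReal.ofReal_coe_nnreal,
    ← ENNReal.ofReal_rpow_of_nonneg hts (one_sub_one_div_toReal_nonneg hp),
    intervalIntegral.integral_of_le hst]
  calc ‖∫ x in Ioc s t, w x‖ₑ
      ≤ eLpNorm w 1 (volume.restrict (Ioc s t)) := by
        rw [eLpNorm_one_eq_lintegral_enorm]; exact enorm_integral_le_lintegral_enorm _
    _ ≤ eLpNorm w p (volume.restrict (Ioc s t)) *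
        volume.restrict (Ioc s t) univ ^ (1 / (1 : ℝ≥0∞).toReal - 1 / p.toReal) :=
      eLpNorm_le_eLpNorm_mul_rpow_measure_univ hp hw
    _ ≤ _ := by
      rw [Measure.restrict_apply_univ, Real.volume_Ioc, ENNReal.toReal_one, div_one]
      gcongr

theorem dist_intervalIntegral_le_of_eLpNorm_le {w : ℝ → E} {p : ℝ≥0∞} (hp : 1 ≤ p) {a b : ℝ}
    {K : ℝ≥0} (hw : IntegrableOn w (Ioc a b)) (hK : eLpNorm w p (volume.restrict (Ioc a b)) ≤ K)
    {s t : ℝ} (hs : s ∈ Icc a b) (ht : t ∈ Icc a b) :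
    dist (∫ x in a..s, w x) (∫ x in a..t, w x) ≤ K * dist s t ^ (1 - 1 / p.toReal) := by
  wlog hst : s ≤ t generalizing s t
  · rw [dist_comm, dist_comm s]
    exact this ht hs (le_of_not_ge hst)
  have hsub : Ioc s t ⊆ Ioc a b := Ioc_subset_Ioc hs.1 ht.2
  have hint : ∀ c ∈ Icc a b, IntervalIntegrable w volume a c := fun c hc =>
    (intervalIntegrable_iff_integrableOn_Ioc_of_le hc.1).2
      (hw.mono_set (Ioc_subset_Ioc_right hc.2))
  rw [dist_comm, dist_eq_norm, intervalIntegral.integral_interval_sub_left (hint t ht) (hint s hs),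
    Real.dist_eq, abs_sub_comm, abs_of_nonneg (sub_nonneg.2 hst)]
  exact norm_intervalIntegral_le_of_eLpNorm_le hp hst (hw.mono_set hsub).aestronglyMeasurable
    ((eLpNorm_mono_measure _ (Measure.restrict_mono hsub le_rfl)).trans hK)

end Holder

theorem exists_mem_Ioc_dist_le_norm_le_of_lintegral_le {E : Type*} [NormedAddCommGroup E]
    {f : ℝ → E} {a b δ : ℝ} {K : ℝ≥0} (hf : AEStronglyMeasurable f (volume.restrict (Ioc a b)))
    (hK : ∫⁻ x in Ioc a b, ‖f x‖ₑ ≤ K) (hδ : 0 < δ) (hδab : δ ≤ b - a)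
    {P : ℝ → Prop} (hP : ∀ᵐ x ∂volume.restrict (Ioc a b), P x) {t : ℝ} (ht : t ∈ Icc a b) :
    ∃ x ∈ Ioc a b, dist t x ≤ δ ∧ ‖f x‖ ≤ K / δ ∧ P x := by
  -- On a window `J ⊆ (a, b]` of length `δ` next to `t`, the mean of `‖f‖` is at most `K / δ`.
  set c := max t (a + δ)
  set J := Ioc (c - δ) c
  have hJ : J ⊆ Ioc a b := Ioc_subset_Ioc (by grind) (max_le ht.2 (by linarith))
  have hJ_vol : volume.restrict J univ = ENNReal.ofReal δ := by simp [J]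
  have hμ : volume.restrict J ≠ 0 := by
    rw [← Measure.measure_univ_ne_zero, hJ_vol]; simpa using hδ
  have hgood : ∀ᵐ x ∂volume.restrict J, x ∈ J ∧ P x :=
    (ae_restrict_mem measurableSet_Ioc).and (ae_restrict_of_ae_restrict_of_subset hJ hP)
  obtain ⟨x, hxN, hx⟩ := exists_notMem_null_le_laverage hμ
    ((hf.mono_measure (Measure.restrict_mono hJ le_rfl)).enorm) (ae_iff.1 hgood)
  obtain ⟨hxJ, hPx⟩ : x ∈ J ∧ P x := by simpa using hxN
  refine ⟨x, hJ hxJ, ?_, ?_, hPx⟩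
  · have : t ≤ c := le_max_left _ _
    have : c ≤ t + δ := max_le (by linarith) (by linarith [ht.1])
    rw [Real.dist_eq, abs_le]
    constructor <;> linarith [hxJ.1, hxJ.2]
  · rw [laverage_eq, hJ_vol] at hx
    have hx' : ‖f x‖ₑ ≤ ENNReal.ofReal (K / δ) := by
      rw [ENNReal.ofReal_div_of_pos hδ, ENNReal.ofReal_coe_nnreal]
      exact hx.trans (ENNReal.div_le_div_right ((lintegral_mono_set hJ).trans hK) _)
    rwa [← ofReal_norm, ENNReal.ofReal_le_ofReal_iff (by positivity)] at hx'

theorem equicontinuousOn_of_dist_le_mul_rpow {ι X α : Type*} [PseudoMetricSpace X]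
    [PseudoMetricSpace α] {F : ι → X → α} {S : Set X} {C e : ℝ} (he : 0 < e)
    (h : ∀ i, ∀ x ∈ S, ∀ y ∈ S, dist (F i x) (F i y) ≤ C * dist x y ^ e) :
    EquicontinuousOn F S :=
  (equicontinuous_restrict_iff F).1 <| Metric.equicontinuous_of_continuity_modulus _
    (tendsto_const_mul_rpow_nhds_zero C he) _ fun x y i => h i x x.2 y y.2

theorem exists_mem_image_closedBall_dist_le {A E : Type*} [NormedAddCommGroup A]
    [PseudoMetricSpace E] {B : A → E} {u : ℝ → A} {g : ℝ → E} {a b C e δ : ℝ} {K : ℝ≥0}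
    (hu : AEStronglyMeasurable u (volume.restrict (Ioc a b)))
    (hK : ∫⁻ x in Ioc a b, ‖u x‖ₑ ≤ K) (hg : ∀ᵐ x ∂volume.restrict (Ioc a b), B (u x) = g x)
    (hg_holder : ∀ s ∈ Icc a b, ∀ t ∈ Icc a b, dist (g s) (g t) ≤ C * dist s t ^ e)
    (hC : 0 ≤ C) (he : 0 ≤ e) (hδ : 0 < δ) (hδab : δ ≤ b - a) {t : ℝ} (ht : t ∈ Icc a b) :
    ∃ y ∈ B '' closedBall 0 (K / δ), dist (g t) y ≤ C * δ ^ e := by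
  obtain ⟨x, hx, htx, hux, hBx⟩ :=
    exists_mem_Ioc_dist_le_norm_le_of_lintegral_le hu hK hδ hδab hg ht
  refine ⟨B (u x), mem_image_of_mem B (mem_closedBall_zero_iff.2 hux), ?_⟩
  rw [hBx]
  calc dist (g t) (g x) ≤ C * dist t x ^ e := hg_holder t ht x (Ioc_subset_Icc_self hx)
    _ ≤ C * δ ^ e := by gcongr

theorem totallyBounded_iUnion_image_Icc {ι A E : Type*} [NormedAddCommGroup A]
    [PseudoMetricSpace E] {B : A → E}
    (hB : ∀ s : Set A, Bornology.IsBounded s → IsCompact (closure (B '' s)))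
    {u : ι → ℝ → A} {g : ι → ℝ → E} {a b C e : ℝ} {K : ℝ≥0} (hab : a < b)
    (hu : ∀ i, AEStronglyMeasurable (u i) (volume.restrict (Ioc a b)))
    (hK : ∀ i, ∫⁻ x in Ioc a b, ‖u i x‖ₑ ≤ K)
    (hg : ∀ i, ∀ᵐ x ∂volume.restrict (Ioc a b), B (u i x) = g i x)
    (hg_holder : ∀ i, ∀ s ∈ Icc a b, ∀ t ∈ Icc a b, dist (g i s) (g i t) ≤ C * dist s t ^ e)
    (hC : 0 ≤ C) (he : 0 < e) : TotallyBounded (⋃ i, g i '' Icc a b) := by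
  refine totallyBounded_of_forall_subset_thickening fun ε hε => ?_
  obtain ⟨δ, ⟨hδ, hδab⟩, hδε⟩ : ∃ δ, δ ∈ Ioc 0 (b - a) ∧ C * δ ^ e < ε :=
    (Eventually.and (Ioc_mem_nhdsGT (sub_pos.2 hab)) (nhdsWithin_le_nhds
      ((tendsto_const_mul_rpow_nhds_zero C he).eventually (gt_mem_nhds hε)))).exists
  refine ⟨B '' closedBall 0 (K / δ),
    (hB _ isBounded_closedBall).totallyBounded.subset subset_closure, ?_⟩
  simp only [iUnion_subset_iff, image_subset_iff]
  intro i t ht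
  obtain ⟨y, hy, hty⟩ := exists_mem_image_closedBall_dist_le (hu i) (hK i) (hg i)
    (hg_holder i) hC he.le hδ hδab ht
  exact mem_thickening_iff.2 ⟨y, hy, hty.trans_lt hδε⟩

theorem stmt15_general
    {A A₁ : Type*} [NormedAddCommGroup A]
    [NormedAddCommGroup A₁] [NormedSpace ℝ A₁] [CompleteSpace A₁]
    (T : ℝ) (hT : 0 < T)
    (p₁ : ℝ≥0∞) (hp₁ : 1 < p₁)
    (B : A → A₁)
    -- B is a compact map: it maps bounded sets to relatively compact sets
    (hB : ∀ s : Set A, Bornology.IsBounded s → IsCompact (closure (B '' s)))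
    (U : Set (ℝ → A))
    -- the elements of U are strongly measurable on (0,T)
    (hUmeas : ∀ u ∈ U, AEStronglyMeasurable u (volume.restrict (Set.Ioc (0 : ℝ) T)))
    -- U is bounded in L¹(0,T;A)
    (hU1 : ∃ K : ℝ, ∀ u ∈ U,
      ∫⁻ t in Set.Ioc (0 : ℝ) T, (‖u t‖₊ : ℝ≥0∞) ≤ ENNReal.ofReal K)
    -- each v = B∘u ∈ V satisfies v(t) = v(0) + ∫₀ᵗ w_v(s) ds with w_v ∈ L^{p₁}(0,T;A₁),
    -- and sup_{v ∈ V} ‖w_v‖_{L^{p₁}(0,T;A₁)} < ∞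
    (hW : ∃ K : ℝ, ∀ u ∈ U, ∃ w : ℝ → A₁,
      IntegrableOn w (Set.Ioc (0 : ℝ) T) ∧
      (∀ᵐ t ∂volume.restrict (Set.Icc (0 : ℝ) T),
        B (u t) = B (u 0) + ∫ s in (0 : ℝ)..t, w s) ∧
      eLpNorm w p₁ (volume.restrict (Set.Ioc (0 : ℝ) T)) ≤ ENNReal.ofReal K) :
    -- conclusion: every sequence in V has a subsequence whose continuous representatives
    -- converge uniformly on [0,T] in the norm of A₁
    ∀ u : ℕ → ℝ → A, (∀ n, u n ∈ U) →
      ∃ ψ : ℕ → ℕ, StrictMono ψ ∧ ∃ g : ℕ → ℝ → A₁,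
        (∀ j, ContinuousOn (g j) (Set.Icc (0 : ℝ) T) ∧
          ∀ᵐ t ∂volume.restrict (Set.Icc (0 : ℝ) T), B (u (ψ j) t) = g j t) ∧
        ∃ L : ℝ → A₁, TendstoUniformlyOn g L atTop (Set.Icc (0 : ℝ) T) := by
  obtain ⟨K₁, hK₁⟩ := hU1
  obtain ⟨K₂, hK₂⟩ := hW
  intro u hu
  choose w hw_int hw_eq hw_norm using fun n => hK₂ (u n) (hu n)
  set G : ℕ → ℝ → A₁ := fun n t => B (u n 0) + ∫ s in (0 : ℝ)..t, w n s
  have he := one_sub_one_div_toReal_pos hp₁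
  have hG_holder : ∀ n, ∀ s ∈ Icc 0 T, ∀ t ∈ Icc 0 T,
      dist (G n s) (G n t) ≤ K₂.toNNReal * dist s t ^ (1 - 1 / p₁.toReal) :=
    fun n s hs t ht => by
      simpa only [G, dist_add_left] using
        dist_intervalIntegral_le_of_eLpNorm_le hp₁.le (hw_int n) (hw_norm n) hs ht
  have hequi : EquicontinuousOn G (Icc 0 T) := equicontinuousOn_of_dist_le_mul_rpow he hG_holder
  have htb : TotallyBounded (⋃ n, G n '' Icc 0 T) :=
    totallyBounded_iUnion_image_Icc hB hT (fun n => hUmeas _ (hu n)) (fun n => hK₁ _ (hu n))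
      (fun n => ae_restrict_of_ae_restrict_of_subset Ioc_subset_Icc_self (hw_eq n)) hG_holder
      K₂.toNNReal.coe_nonneg he
  obtain ⟨ψ, hψ, L, hL⟩ := hequi.exists_strictMono_tendstoUniformlyOn isCompact_Icc htb
  exact ⟨ψ, hψ, fun j => G (ψ j), fun j => ⟨hequi.continuousOn (ψ j), hw_eq (ψ j)⟩, L, hL⟩

/-- Corollary of Maitre's theorem, case p₁ > 1: if B : A → A₁ is a (possibly nonlinear)
compact map, U is bounded in L¹(0,T;A), V = B∘U is bounded in L^r(0,T;A₁) for some r > 1,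
and dV/dt is bounded in L^{p₁}(0,T;A₁) with p₁ > 1, then V is relatively compact in
C([0,T];A₁). -/
theorem stmt15
    {A A₁ : Type*} [NormedAddCommGroup A] [NormedSpace ℝ A] [CompleteSpace A]
    [NormedAddCommGroup A₁] [NormedSpace ℝ A₁] [CompleteSpace A₁]
    (T : ℝ) (hT : 0 < T)
    (p₁ : ℝ≥0∞) (hp₁ : 1 < p₁)
    (B : A → A₁)
    -- B is a compact map: it maps bounded sets to relatively compact sets
    (hB : ∀ s : Set A, Bornology.IsBounded s → IsCompact (closure (B '' s)))
    (U : Set (ℝ → A))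
    -- the elements of U are strongly measurable on (0,T)
    (hUmeas : ∀ u ∈ U, AEStronglyMeasurable u (volume.restrict (Set.Ioc (0 : ℝ) T)))
    -- U is bounded in L¹(0,T;A)
    (hU1 : ∃ K : ℝ, ∀ u ∈ U,
      ∫⁻ t in Set.Ioc (0 : ℝ) T, (‖u t‖₊ : ℝ≥0∞) ≤ ENNReal.ofReal K)
    -- the elements of V = B∘U are strongly measurable on (0,T)
    (hVmeas : ∀ u ∈ U,
      AEStronglyMeasurable (fun t => B (u t)) (volume.restrict (Set.Ioc (0 : ℝ) T)))
    -- V is bounded in L^r(0,T;A₁) for some r > 1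
    (hVr : ∃ r : ℝ≥0∞, 1 < r ∧ ∃ K : ℝ, ∀ u ∈ U,
      eLpNorm (fun t => B (u t)) r (volume.restrict (Set.Ioc (0 : ℝ) T)) ≤ ENNReal.ofReal K)
    -- each v = B∘u ∈ V satisfies v(t) = v(0) + ∫₀ᵗ w_v(s) ds with w_v ∈ L^{p₁}(0,T;A₁),
    -- and sup_{v ∈ V} ‖w_v‖_{L^{p₁}(0,T;A₁)} < ∞
    (hW : ∃ K : ℝ, ∀ u ∈ U, ∃ w : ℝ → A₁,
      IntegrableOn w (Set.Ioc (0 : ℝ) T) ∧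
      (∀ᵐ t ∂volume.restrict (Set.Icc (0 : ℝ) T),
        B (u t) = B (u 0) + ∫ s in (0 : ℝ)..t, w s) ∧
      eLpNorm w p₁ (volume.restrict (Set.Ioc (0 : ℝ) T)) ≤ ENNReal.ofReal K) :
    -- conclusion: every sequence in V has a subsequence whose continuous representatives
    -- converge uniformly on [0,T] in the norm of A₁
    ∀ u : ℕ → ℝ → A, (∀ n, u n ∈ U) →
      ∃ ψ : ℕ → ℕ, StrictMono ψ ∧ ∃ g : ℕ → ℝ → A₁,
        (∀ j, ContinuousOn (g j) (Set.Icc (0 : ℝ) T) ∧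
          ∀ᵐ t ∂volume.restrict (Set.Icc (0 : ℝ) T), B (u (ψ j) t) = g j t) ∧
        ∃ L : ℝ → A₁, TendstoUniformlyOn g L atTop (Set.Icc (0 : ℝ) T) :=
  stmt15_general T hT p₁ hp₁ B hB U hUmeas hU1 hW
end
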